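/- arXiv:2506.23613 — 8 statements merged into one kernel-verified Lean document; each statement's English description precedes it below -/
import Mathlib

section
/- Assume Q(r) = 0 for all r ∈ R. Then there exists a unique mapping Q̂ : Ŝ → F such that a* ⋈ x implies Q̂(a*) = Q(x) (for a* ∈ Ŝ, x ∈ S), and this mapping Q̂ is a quadratic form on Ŝ (i.e. Q̂(c•a*) = c²Q̂(a*) and (a*,b*) ↦ Q̂(a*+b*) − Q̂(a*) − Q̂(b*) is bilinear). -/
/-- Existence and uniqueness of the dual quadratic form `Q̂ : Ŝ → F`, which
satisfies `a* ⋈ x → Q̂ a* = Q x`; moreover any such mapping is a quadratic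
form on `Ŝ`. -/
theorem stmt8 {F V : Type*} [Field F] [AddCommGroup V] [Module F V]
    [FiniteDimensional F V]
    (S : Submodule F V) (Q : S → F) (B : S →ₗ[F] S →ₗ[F] F)
    (hQ : ∀ (c : F) (x : S), Q (c • x) = c ^ 2 * Q x)
    (hB : ∀ x y : S, B x y = Q (x + y) - Q x - Q y)
    (R : Submodule F S)
    (hR : ∀ x : S, x ∈ R ↔ ∀ y : S, B x y = 0)
    (Shat : Submodule F (Module.Dual F V))
    (hShat : ∀ a : Module.Dual F V, a ∈ Shat ↔ ∀ r : S, r ∈ R → a r = 0)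
    (hQrad : ∀ r : S, r ∈ R → Q r = 0) :
    (∃! Qhat : Shat → F, ∀ (a : Shat) (x : S),
        (∀ y : S, (a : Module.Dual F V) y = B x y) → Qhat a = Q x) ∧
    (∀ Qhat : Shat → F,
      (∀ (a : Shat) (x : S),
        (∀ y : S, (a : Module.Dual F V) y = B x y) → Qhat a = Q x) →
      (∀ (c : F) (a : Shat), Qhat (c • a) = c ^ 2 * Qhat a) ∧
      ∃ Bhat : Shat →ₗ[F] Shat →ₗ[F] F,
        ∀ a b : Shat, Bhat a b = Qhat (a + b) - Qhat a - Qhat b) := by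
  -- B is symmetric
  have hBsymm : ∀ x y : S, B x y = B y x := by
    intro x y; rw [hB, hB, add_comm]; ring
  -- kernel of B (as map S → Dual F S) is R
  have hker : LinearMap.ker B = R := by
    ext x
    simp only [LinearMap.mem_ker, hR]
    constructor
    · intro h y; rw [h]; rfl
    · intro h; ext y; exact h y
  -- range of B is the dual annihilator of R
  have hrange : LinearMap.range B = R.dualAnnihilator := by
    apply Submodule.eq_of_le_of_finrank_eq
    · rintro _ ⟨x, rfl⟩
      rw [Submodule.mem_dualAnnihilator]
      intro r hr
      rw [hBsymm]
      exact (hR r).mp hr x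
    · have h1 := LinearMap.finrank_range_add_finrank_ker B
      have h2 : Module.finrank F R.dualAnnihilator = Module.finrank F (↥S ⧸ R) := by
        exact (LinearEquiv.finrank_eq (R := F) (M := ↥S ⧸ R)
          (N := ↥R.dualAnnihilator) (Subspace.quotEquivAnnihilator R)).symm
      have h3 := Submodule.finrank_quotient_add_finrank R
      rw [hker] at h1
      rw [h2]
      exact Nat.add_right_cancel (h1.trans h3.symm)
  -- every element of Shat is linked to some x
  have hlink : ∀ a : Shat, ∃ x : S, ∀ y : S, (a : Module.Dual F V) y = B x y := by
    intro a
    have hmem : (a : Module.Dual F V).comp S.subtype ∈ R.dualAnnihilator := by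
      rw [Submodule.mem_dualAnnihilator]
      intro r hr
      exact (hShat a).mp a.2 r hr
    rw [← hrange] at hmem
    obtain ⟨x, hx⟩ := hmem
    exact ⟨x, fun y => (LinearMap.congr_fun hx y).symm⟩
  -- Q is constant on link classes
  have hwd : ∀ x x' : S, (∀ y, B x y = B x' y) → Q x = Q x' := by
    intro x x' h
    have hmem : x - x' ∈ R := by
      rw [hR]
      intro y
      have := h y
      simp [map_sub, this]
    have e := hB (x - x') x'
    rw [(hR _).mp hmem x', hQrad _ hmem, sub_add_cancel] at e
    linear_combination -e
  -- choose a link for each a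
  let ch : Shat → S := fun a => Classical.choose (hlink a)
  have hch : ∀ (a : Shat) (y : S), (a : Module.Dual F V) y = B (ch a) y :=
    fun a => Classical.choose_spec (hlink a)
  set Qhat0 : Shat → F := fun a => Q (ch a) with hQhat0
  have hspec : ∀ (a : Shat) (x : S),
      (∀ y : S, (a : Module.Dual F V) y = B x y) → Qhat0 a = Q x := by
    intro a x hx
    exact hwd (ch a) x (fun y => by rw [← hch a y, hx y])
  constructor
  · exact ⟨Qhat0, hspec, fun Q' hQ' => funext fun a => by
      rw [hQ' a (ch a) (hch a), hspec a (ch a) (hch a)]⟩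
  · intro Qhat hQhat
    -- sums and scalar multiples of links
    have hchadd : ∀ a b : Shat, ∀ y : S,
        ((a + b : Shat) : Module.Dual F V) y = B (ch a + ch b) y := by
      intro a b y
      simp [map_add, hch a y, hch b y]
    have hchsmul : ∀ (c : F) (a : Shat), ∀ y : S,
        ((c • a : Shat) : Module.Dual F V) y = B (c • ch a) y := by
      intro c a y
      simp [hch a y]
    constructor
    · intro c a
      rw [hQhat (c • a) (c • ch a) (hchsmul c a), hQ, hQhat a (ch a) (hch a)]
    · -- the key identity: Qhat(a+b) - Qhat a - Qhat b = a (ch b)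
      have key : ∀ a b : Shat,
          Qhat (a + b) - Qhat a - Qhat b = (a : Module.Dual F V) (ch b) := by
        intro a b
        rw [hQhat (a + b) (ch a + ch b) (hchadd a b), hQhat a (ch a) (hch a),
          hQhat b (ch b) (hch b), ← hB, ← hch a (ch b)]
      -- symmetry form: a (ch b) = b (ch a)
      have keysymm : ∀ a b : Shat,
          (a : Module.Dual F V) (ch b) = (b : Module.Dual F V) (ch a) := by
        intro a b
        rw [hch a (ch b), hBsymm, ← hch b (ch a)]
      refine ⟨LinearMap.mk₂ F (fun a b => (a : Module.Dual F V) (ch b))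
        (fun a a' b => by simp) (fun c a b => by simp)
        (fun a b b' => by
          show (a : Module.Dual F V) (ch (b + b'))
              = (a : Module.Dual F V) (ch b) + (a : Module.Dual F V) (ch b')
          rw [keysymm a (b + b'), keysymm a b, keysymm a b']; simp)
        (fun c a b => by
          show (a : Module.Dual F V) (ch (c • b))
              = c • (a : Module.Dual F V) (ch b)
          rw [keysymm a (c • b), keysymm a b]; simp), ?_⟩
      intro a b
      rw [LinearMap.mk₂_apply, key a b]
end

section
/- Assume Q(r) = 0 for all r ∈ R, and let Q̂ be the dual quadratic form of Q with polar form B̂(a*,b*) := Q̂(a*+b*) − Q̂(a*) − Q̂(b*). If f₁* ⋈ s₁ and f₂* ⋈ s₂ (with f₁*, f₂* ∈ Ŝ and s₁, s₂ ∈ S), then B̂(f₁*, f₂*) = B(s₁, s₂). -/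
theorem stmt9 {F V : Type*} [Field F] [AddCommGroup V] [Module F V]
    [FiniteDimensional F V]
    (S : Submodule F V) (Q : S → F) (B : S →ₗ[F] S →ₗ[F] F)
    (hQ : ∀ (c : F) (x : S), Q (c • x) = c ^ 2 * Q x)
    (hB : ∀ x y : S, B x y = Q (x + y) - Q x - Q y)
    (R : Submodule F S)
    (hR : ∀ x : S, x ∈ R ↔ ∀ y : S, B x y = 0)
    (Shat : Submodule F (Module.Dual F V))
    (hShat : ∀ a : Module.Dual F V, a ∈ Shat ↔ ∀ r : S, r ∈ R → a r = 0)
    (hQrad : ∀ r : S, r ∈ R → Q r = 0)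
    (Qhat : Shat → F)
    (hQhat : ∀ (a : Shat) (x : S),
      (∀ y : S, (a : Module.Dual F V) y = B x y) → Qhat a = Q x)
    (f₁ f₂ : Shat) (s₁ s₂ : S)
    (h₁ : ∀ y : S, (f₁ : Module.Dual F V) y = B s₁ y)
    (h₂ : ∀ y : S, (f₂ : Module.Dual F V) y = B s₂ y) :
    Qhat (f₁ + f₂) - Qhat f₁ - Qhat f₂ = B s₁ s₂ := by
  have e12 : Qhat (f₁ + f₂) = Q (s₁ + s₂) := by
    apply hQhat (f₁ + f₂) (s₁ + s₂)
    intro y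
    simp [h₁ y, h₂ y, map_add, LinearMap.add_apply]
  rw [e12, hQhat f₁ s₁ h₁, hQhat f₂ s₂ h₂, hB]
end

section
/- Assume Q(r) = 0 for all r ∈ R, and let Q̂ be the dual quadratic form of Q with polar form B̂. If f* ⋈ s (with f* ∈ Ŝ, s ∈ S), then B̂(a*, f*) = a*(s) for all a* ∈ Ŝ. -/
theorem stmt10 {F V : Type*} [Field F] [AddCommGroup V] [Module F V]
    [FiniteDimensional F V]
    (S : Submodule F V) (Q : S → F) (B : S →ₗ[F] S →ₗ[F] F)
    (hQ : ∀ (c : F) (x : S), Q (c • x) = c ^ 2 * Q x)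
    (hB : ∀ x y : S, B x y = Q (x + y) - Q x - Q y)
    (R : Submodule F S)
    (hR : ∀ x : S, x ∈ R ↔ ∀ y : S, B x y = 0)
    (Shat : Submodule F (Module.Dual F V))
    (hShat : ∀ a : Module.Dual F V, a ∈ Shat ↔ ∀ r : S, r ∈ R → a r = 0)
    (hQrad : ∀ r : S, r ∈ R → Q r = 0)
    (Qhat : Shat → F)
    (hQhat : ∀ (a : Shat) (x : S),
      (∀ y : S, (a : Module.Dual F V) y = B x y) → Qhat a = Q x)
    (f : Shat) (s : S)
    (hfs : ∀ y : S, (f : Module.Dual F V) y = B s y) :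
    ∀ a : Shat, Qhat (a + f) - Qhat a - Qhat f = (a : Module.Dual F V) s := by
  have hBsymm : ∀ x y : S, B x y = B y x := by
    intro x y; rw [hB, hB, add_comm]; ring
  intro a
  set a' : Module.Dual F S := (a : Module.Dual F V).comp S.subtype with ha'def
  have ha'mem : a' ∈ R.dualAnnihilator := by
    rw [Submodule.mem_dualAnnihilator]
    intro r hr
    exact (hShat a).mp a.2 r hr
  have hker : LinearMap.ker B = R := by
    ext x
    simp only [LinearMap.mem_ker, hR x]
    constructor
    · intro h y; rw [h]; rfl
    · intro h; ext y; exact h y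
  have hrange : LinearMap.range B = R.dualAnnihilator := by
    have hle : LinearMap.range B ≤ R.dualAnnihilator := by
      rintro _ ⟨x, rfl⟩
      rw [Submodule.mem_dualAnnihilator]
      intro r hr
      rw [hBsymm]
      exact (hR r).mp hr x
    apply Submodule.eq_of_le_of_finrank_le hle
    rw [← hker]
    have e1 : Module.finrank F (↥S ⧸ LinearMap.ker B)
        = Module.finrank F (LinearMap.ker B).dualAnnihilator :=
      LinearEquiv.finrank_eq (Subspace.quotEquivAnnihilator (LinearMap.ker B))
    have e2 : Module.finrank F (↥S ⧸ LinearMap.ker B)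
        = Module.finrank F (LinearMap.range B) :=
      LinearEquiv.finrank_eq B.quotKerEquivRange
    exact (e1.symm.trans e2).le
  obtain ⟨x, hx⟩ : ∃ x : S, B x = a' := by
    rw [← LinearMap.mem_range, hrange]; exact ha'mem
  have hax : ∀ y : S, (a : Module.Dual F V) y = B x y := by
    intro y
    rw [hx]; rfl
  have h1 : Qhat a = Q x := hQhat a x hax
  have h2 : Qhat f = Q s := hQhat f s hfs
  have h3 : Qhat (a + f) = Q (x + s) := by
    apply hQhat (a + f) (x + s)
    intro y
    have : ((a + f : Shat) : Module.Dual F V) y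
        = (a : Module.Dual F V) y + (f : Module.Dual F V) y := rfl
    rw [this, hax y, hfs y]
    simp
  rw [h1, h2, h3, ← hB, hax s]
end

section
/- Assume Q(r) = 0 for all r ∈ R, and let Q̂ be the dual quadratic form of Q with polar form B̂. Then the radical of B̂, namely {f* ∈ Ŝ | B̂(a*, f*) = 0 for all a* ∈ Ŝ}, equals R̂ = ann_V(S). -/
theorem stmt11 {F V : Type*} [Field F] [AddCommGroup V] [Module F V]
    [FiniteDimensional F V]
    (S : Submodule F V) (Q : S → F) (B : S →ₗ[F] S →ₗ[F] F)
    (hQ : ∀ (c : F) (x : S), Q (c • x) = c ^ 2 * Q x)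
    (hB : ∀ x y : S, B x y = Q (x + y) - Q x - Q y)
    (R : Submodule F S)
    (hR : ∀ x : S, x ∈ R ↔ ∀ y : S, B x y = 0)
    (Shat : Submodule F (Module.Dual F V))
    (hShat : ∀ a : Module.Dual F V, a ∈ Shat ↔ ∀ r : S, r ∈ R → a r = 0)
    (hQrad : ∀ r : S, r ∈ R → Q r = 0)
    (Qhat : Shat → F)
    (hQhat : ∀ (a : Shat) (x : S),
      (∀ y : S, (a : Module.Dual F V) y = B x y) → Qhat a = Q x)
    (Rhat : Submodule F (Module.Dual F V))
    (hRhat : ∀ a : Module.Dual F V, a ∈ Rhat ↔ ∀ x : S, a x = 0) :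
    ∀ f : Shat, (∀ a : Shat, Qhat (a + f) - Qhat a - Qhat f = 0) ↔
      (f : Module.Dual F V) ∈ Rhat := by
  have Bsymm : ∀ x y : S, B x y = B y x := by
    intro x y; rw [hB, hB, add_comm]; ring
  -- the range of B equals the dual annihilator of R
  have hker : LinearMap.ker B = R := by
    ext x
    rw [LinearMap.mem_ker, hR]
    constructor
    · intro h y; rw [h]; rfl
    · intro h; ext y; exact h y
  have hle : LinearMap.range B ≤ R.dualAnnihilator := by
    rintro b ⟨x, rfl⟩
    rw [Submodule.mem_dualAnnihilator]
    intro r hr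
    rw [Bsymm]
    exact (hR r).mp hr x
  have hrange : LinearMap.range B = R.dualAnnihilator := by
    apply Submodule.eq_of_le_of_finrank_le hle
    have h1 := LinearMap.finrank_range_add_finrank_ker B
    rw [hker] at h1
    have h2 := Submodule.finrank_quotient_add_finrank R
    have h3 : Module.finrank F (S ⧸ R) = Module.finrank F R.dualAnnihilator :=
      (Subspace.quotEquivAnnihilator R).finrank_eq
    rw [h3] at h2
    exact le_of_eq (Nat.add_right_cancel (h2.trans h1.symm))
  -- every element of Shat is B-linked to some x : S
  have key : ∀ a : Shat, ∃ x : S, ∀ y : S, (a : Module.Dual F V) y = B x y := by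
    intro a
    have : (a : Module.Dual F V).comp S.subtype ∈ R.dualAnnihilator := by
      rw [Submodule.mem_dualAnnihilator]
      intro r hr
      exact (hShat a).mp a.2 r hr
    rw [← hrange] at this
    obtain ⟨x, hx⟩ := this
    exact ⟨x, fun y => by rw [hx]; rfl⟩
  have hQ0 : Q 0 = 0 := by
    have := hQ 0 0
    rw [zero_smul] at this
    simpa using this
  intro f
  obtain ⟨z, hz⟩ := key f
  constructor
  · intro h
    rw [hRhat]
    intro x
    -- build a ∈ Shat linked to x
    obtain ⟨g, hg⟩ := LinearMap.exists_extend (B x)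
    have hgS : ∀ y : S, g y = B x y := by
      intro y; rw [← hg]; rfl
    have hgmem : g ∈ Shat := by
      rw [hShat]
      intro r hr
      rw [hgS r, Bsymm]
      exact (hR r).mp hr x
    set a : Shat := ⟨g, hgmem⟩ with ha
    have h1 : Qhat a = Q x := hQhat a x hgS
    have h2 : Qhat f = Q z := hQhat f z hz
    have h3 : Qhat (a + f) = Q (x + z) := by
      apply hQhat
      intro y
      have : ((a + f : Shat) : Module.Dual F V) y = g y + (f : Module.Dual F V) y := rfl
      rw [this, hgS y, hz y, map_add, LinearMap.add_apply]
    have h4 := h a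
    rw [h1, h2, h3] at h4
    have h5 : B x z = 0 := by rw [hB]; exact h4
    have : (f : Module.Dual F V) x = B z x := hz x
    rw [this, ← Bsymm, h5]
  · intro hf a
    rw [hRhat] at hf
    obtain ⟨x, hx⟩ := key a
    have h1 : Qhat a = Q x := hQhat a x hx
    have h2 : Qhat f = Q 0 := by
      apply hQhat
      intro y
      rw [hf y, map_zero]
      rfl
    have h3 : Qhat (a + f) = Q x := by
      apply hQhat
      intro y
      have : ((a + f : Shat) : Module.Dual F V) y =
          (a : Module.Dual F V) y + (f : Module.Dual F V) y := rfl
      rw [this, hf y, add_zero, hx y]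
    rw [h1, h2, h3, hQ0]
    ring
end

section
/- Assume Q(r) = 0 for all r ∈ R, and let Q̂ : Ŝ → F be the dual quadratic form of Q with polar form B̂. Identifying V with the dual of V* via the canonical evaluation, for every f* ∈ Ŝ and x ∈ S the following are equivalent: (i) f* ⋈ x (that is, f*(y) = B(x,y) for all y ∈ S); (ii) x is B̂-linked to f* (that is, a*(x) = B̂(a*, f*) for all a* ∈ Ŝ). In other words, the B̂-linked relation on S × Ŝ is the converse of the B-linked relation on Ŝ × S. -/
theorem stmt13 {F V : Type*} [Field F] [AddCommGroup V] [Module F V]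
    [FiniteDimensional F V]
    (S : Submodule F V) (Q : S → F) (B : S →ₗ[F] S →ₗ[F] F)
    (hQ : ∀ (c : F) (x : S), Q (c • x) = c ^ 2 * Q x)
    (hB : ∀ x y : S, B x y = Q (x + y) - Q x - Q y)
    (R : Submodule F S)
    (hR : ∀ x : S, x ∈ R ↔ ∀ y : S, B x y = 0)
    (Shat : Submodule F (Module.Dual F V))
    (hShat : ∀ a : Module.Dual F V, a ∈ Shat ↔ ∀ r : S, r ∈ R → a r = 0)
    (hQrad : ∀ r : S, r ∈ R → Q r = 0)
    (Qhat : Shat → F)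
    (hQhat : ∀ (a : Shat) (x : S),
      (∀ y : S, (a : Module.Dual F V) y = B x y) → Qhat a = Q x)
    (f : Shat) (x : S) :
    (∀ y : S, (f : Module.Dual F V) y = B x y) ↔
    (∀ a : Shat, (a : Module.Dual F V) x = Qhat (a + f) - Qhat a - Qhat f) := by
  classical
  have Bsymm : ∀ u v : S, B u v = B v u := by
    intro u v; rw [hB, hB, add_comm u v]; ring
  -- the kernel of B (as map S → Dual F S) is R
  have hker : LinearMap.ker (B : S →ₗ[F] Module.Dual F S) = R := by
    ext u
    rw [LinearMap.mem_ker, hR]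
    constructor
    · intro h y; rw [show B u = 0 from h]; rfl
    · intro h; ext y; exact h y
  -- the range of B is the dual annihilator of R in Dual F S
  have hrange : LinearMap.range (B : S →ₗ[F] Module.Dual F S)
      = Submodule.dualAnnihilator R := by
    apply Submodule.eq_of_le_of_finrank_le
    · rintro _ ⟨u, rfl⟩
      rw [Submodule.mem_dualAnnihilator]
      intro r hr
      rw [Bsymm]
      exact (hR r).1 hr u
    · have h1 := LinearMap.finrank_range_add_finrank_ker
        (B : S →ₗ[F] Module.Dual F S)
      rw [hker] at h1
      have h2 : Module.finrank F (S ⧸ R) = Module.finrank F (Submodule.dualAnnihilator R) :=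
        (Subspace.quotEquivAnnihilator R).finrank_eq
      have h3 := Submodule.finrank_quotient_add_finrank R
      rw [← h2]; omega
  -- every element of Shat is linked to some element of S
  have linked : ∀ a : Shat, ∃ xa : S, ∀ y : S,
      (a : Module.Dual F V) y = B xa y := by
    intro a
    have hmem : S.dualRestrict (a : Module.Dual F V)
        ∈ Submodule.dualAnnihilator R := by
      rw [Submodule.mem_dualAnnihilator]
      intro r hr
      rw [Submodule.dualRestrict_apply]
      exact (hShat a).1 a.2 r hr
    rw [← hrange] at hmem
    obtain ⟨xa, hxa⟩ := hmem
    refine ⟨xa, fun y => ?_⟩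
    have := congrFun (congrArg DFunLike.coe hxa) y
    simpa [Submodule.dualRestrict_apply] using this.symm
  -- forward direction, as a general statement
  have fwd : ∀ x' : S, (∀ y : S, (f : Module.Dual F V) y = B x' y) →
      ∀ a : Shat, (a : Module.Dual F V) x' = Qhat (a + f) - Qhat a - Qhat f := by
    intro x' hf a
    obtain ⟨xa, hxa⟩ := linked a
    have h1 : Qhat (a + f) = Q (xa + x') := by
      apply hQhat (a + f) (xa + x')
      intro y
      have : ((a + f : Shat) : Module.Dual F V) y
          = (a : Module.Dual F V) y + (f : Module.Dual F V) y := rfl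
      rw [this, hxa y, hf y, map_add, LinearMap.add_apply]
    have h2 : Qhat a = Q xa := hQhat a xa hxa
    have h3 : Qhat f = Q x' := hQhat f x' hf
    rw [h1, h2, h3, ← hB]
    exact hxa x'
  constructor
  · exact fwd x
  · intro h
    obtain ⟨xf, hxf⟩ := linked f
    have h' := fwd xf hxf
    -- every a ∈ Shat vanishes on x - xf
    have hvan : ((x - xf : S) : V) ∈ Submodule.dualCoannihilator Shat := by
      rw [Submodule.mem_dualCoannihilator]
      intro φ hφ
      have := (h ⟨φ, hφ⟩).trans (h' ⟨φ, hφ⟩).symm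
      simp only [Submodule.coe_sub, map_sub]
      rw [this]; ring
    have hShat' : Shat = Submodule.dualAnnihilator (R.map S.subtype) := by
      ext a
      rw [hShat, Submodule.mem_dualAnnihilator]
      constructor
      · rintro ha _ ⟨r, hr, rfl⟩; exact ha r hr
      · intro ha r hr; exact ha r ⟨r, hr, rfl⟩
    rw [hShat', Subspace.dualAnnihilator_dualCoannihilator_eq] at hvan
    obtain ⟨r, hrR, hr⟩ := hvan
    have hrx : r = x - xf := Subtype.ext hr
    have hmem : x - xf ∈ R := hrx ▸ hrR
    intro y
    have h0 := (hR (x - xf)).1 hmem y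
    rw [map_sub, LinearMap.sub_apply] at h0
    rw [hxf y]
    linear_combination -h0
end

section
/- Assume Q(r) = 0 for all r ∈ R, and let Q̂ : Ŝ → F be the dual quadratic form of Q with polar form B̂. Identifying V with the dual of V* via the canonical evaluation, the dual quadratic form of Q̂ (constructed on the annihilator in V of the radical of B̂, which equals S) coincides with Q: for every x ∈ S and f* ∈ Ŝ with a*(x) = B̂(a*, f*) for all a* ∈ Ŝ, one has Q(x) = Q̂(f*). -/
theorem stmt14 {F V : Type*} [Field F] [AddCommGroup V] [Module F V]
    [FiniteDimensional F V]
    (S : Submodule F V) (Q : S → F) (B : S →ₗ[F] S →ₗ[F] F)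
    (hQ : ∀ (c : F) (x : S), Q (c • x) = c ^ 2 * Q x)
    (hB : ∀ x y : S, B x y = Q (x + y) - Q x - Q y)
    (R : Submodule F S)
    (hR : ∀ x : S, x ∈ R ↔ ∀ y : S, B x y = 0)
    (Shat : Submodule F (Module.Dual F V))
    (hShat : ∀ a : Module.Dual F V, a ∈ Shat ↔ ∀ r : S, r ∈ R → a r = 0)
    (hQrad : ∀ r : S, r ∈ R → Q r = 0)
    (Qhat : Shat → F)
    (hQhat : ∀ (a : Shat) (x : S),
      (∀ y : S, (a : Module.Dual F V) y = B x y) → Qhat a = Q x)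
    (x : S) (f : Shat)
    (h : ∀ a : Shat, (a : Module.Dual F V) x = Qhat (a + f) - Qhat a - Qhat f) :
    Q x = Qhat f := by
  classical
  have hBsymm : ∀ u v : S, B u v = B v u := by
    intro u v; rw [hB, hB, add_comm]; ring
  have hker : LinearMap.ker B = R := by
    ext z
    simp only [LinearMap.mem_ker, hR z]
    constructor
    · intro hz y; rw [hz]; rfl
    · intro hz; ext y; exact hz y
  have hle : LinearMap.range B ≤ R.dualAnnihilator := by
    rintro _ ⟨z, rfl⟩
    rw [Submodule.mem_dualAnnihilator]
    intro r hr
    have := (hR r).mp hr z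
    rw [hBsymm z r]; exact this
  have hrange : LinearMap.range B = R.dualAnnihilator := by
    apply Submodule.eq_of_le_of_finrank_eq hle
    have h1 := LinearMap.finrank_range_add_finrank_ker B
    have h2 : Module.finrank F R.dualAnnihilator = Module.finrank F (S ⧸ R) :=
      (Subspace.quotEquivAnnihilator R).finrank_eq.symm
    have h3 := Submodule.finrank_quotient_add_finrank R
    rw [hker] at h1
    rw [h2]
    omega
  -- f restricted to S is in the range of B
  have hfmem : (f : Module.Dual F V).comp S.subtype ∈ LinearMap.range B := by
    rw [hrange, Submodule.mem_dualAnnihilator]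
    intro r hr
    exact (hShat f).mp f.2 r hr
  obtain ⟨x₀, hx₀⟩ := hfmem
  have hflink : ∀ y : S, (f : Module.Dual F V) y = B x₀ y := by
    intro y
    exact (LinearMap.congr_fun hx₀ y).symm
  have hQf : Qhat f = Q x₀ := hQhat f x₀ hflink
  -- every z ∈ S has a linked form in Shat
  have hext : ∀ z : S, ∃ a : Shat, ∀ y : S, (a : Module.Dual F V) y = B z y := by
    intro z
    obtain ⟨g, hg⟩ := LinearMap.exists_extend (B z)
    have hgS : g ∈ Shat := by
      rw [hShat]
      intro r hr
      have : g r = B z r := LinearMap.congr_fun hg r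
      rw [this, hBsymm z r]
      exact (hR r).mp hr z
    exact ⟨⟨g, hgS⟩, fun y => LinearMap.congr_fun hg y⟩
  -- x - x₀ ∈ R
  have hxR : x - x₀ ∈ R := by
    rw [hR]
    intro z
    obtain ⟨a, ha⟩ := hext z
    have hQa : Qhat a = Q z := hQhat a z ha
    have hQaf : Qhat (a + f) = Q (z + x₀) := by
      apply hQhat
      intro y
      have : ((a + f : Shat) : Module.Dual F V) y = (a : Module.Dual F V) y
          + (f : Module.Dual F V) y := rfl
      rw [this, ha y, hflink y, ← LinearMap.add_apply, ← map_add]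
    have hax := h a
    rw [hQa, hQaf, hQf, ha x] at hax
    have hBzx : B z x = B z x₀ := by
      rw [hax, hB z x₀]
    rw [hBsymm (x - x₀) z]
    simp only [map_sub]
    rw [hBzx, sub_self]
  -- conclude
  have hBx₀ : B x₀ (x - x₀) = 0 := by
    rw [hBsymm]; exact (hR _).mp hxR x₀
  have := hB x₀ (x - x₀)
  rw [add_sub_cancel, hQrad _ hxR, hBx₀] at this
  rw [hQf]
  linear_combination -this
end

section
/- Assume Q(r) = 0 for all r ∈ R, and let Q̂ be the dual quadratic form of Q with polar form B̂. Let n = dim V, m = dim S, d = dim R, and let e₁,…,e_n be a basis of V with R = span{e₁,…,e_d} and S = span{e₁,…,e_m}, and let e₁*,…,e_n* be the dual basis of V*. Define the (m−d)×(m−d) matrices G₂₂ := (B(e_i, e_j))_{d+1 ≤ i,j ≤ m} and Ĝ₂₂ := (B̂(e_i*, e_j*))_{d+1 ≤ i,j ≤ m}. Then G₂₂ is invertible and Ĝ₂₂ = G₂₂⁻¹. -/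
set_option maxHeartbeats 1000000


/-- In adapted coordinates (a basis `e` of `V` whose first `d` vectors span `R`
and first `m` vectors span `S`), the Gram matrix `Ĝ₂₂` of the polar form of the
dual quadratic form `Q̂` with respect to the dual basis vectors
`e_{d+1}*, …, e_m*` is the inverse of the Gram matrix `G₂₂` of `B` with
respect to `e_{d+1}, …, e_m`; in particular `G₂₂` is invertible. -/
theorem stmt16 {F V : Type*} [Field F] [AddCommGroup V] [Module F V]
    [FiniteDimensional F V]
    (S : Submodule F V) (Q : S → F) (B : S →ₗ[F] S →ₗ[F] F)
    (hQ : ∀ (c : F) (x : S), Q (c • x) = c ^ 2 * Q x)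
    (hB : ∀ x y : S, B x y = Q (x + y) - Q x - Q y)
    (R : Submodule F S)
    (hR : ∀ x : S, x ∈ R ↔ ∀ y : S, B x y = 0)
    (Shat : Submodule F (Module.Dual F V))
    (hShat : ∀ a : Module.Dual F V, a ∈ Shat ↔ ∀ r : S, r ∈ R → a r = 0)
    (hQrad : ∀ r : S, r ∈ R → Q r = 0)
    (Qhat : Shat → F)
    (hQhat : ∀ (a : Shat) (x : S),
      (∀ y : S, (a : Module.Dual F V) y = B x y) → Qhat a = Q x)
    (n m d : ℕ)
    (hn : n = Module.finrank F V) (hm : m = Module.finrank F S)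
    (hd : d = Module.finrank F R) (hdm : d ≤ m) (hmn : m ≤ n)
    (e : Module.Basis (Fin n) F V)
    (hSe : S = Submodule.span F {v : V | ∃ i : Fin n, (i : ℕ) < m ∧ v = e i})
    (hRe : R.map S.subtype =
      Submodule.span F {v : V | ∃ i : Fin n, (i : ℕ) < d ∧ v = e i})
    (hmemS : ∀ i : Fin n, (i : ℕ) < m → e i ∈ S)
    (hmemShat : ∀ i : Fin n, d ≤ (i : ℕ) → e.dualBasis i ∈ Shat)
    (G Ghat : Matrix (Fin (m - d)) (Fin (m - d)) F)
    (hG : ∀ i j : Fin (m - d),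
      G i j = B ⟨e ⟨d + i, by have := i.isLt; omega⟩,
                  hmemS _ (by have := i.isLt; simp; omega)⟩
                ⟨e ⟨d + j, by have := j.isLt; omega⟩,
                  hmemS _ (by have := j.isLt; simp; omega)⟩)
    (hGhat : ∀ i j : Fin (m - d),
      Ghat i j =
        Qhat (⟨e.dualBasis ⟨d + i, by have := i.isLt; omega⟩,
                hmemShat _ (by simp)⟩
            + ⟨e.dualBasis ⟨d + j, by have := j.isLt; omega⟩,
                hmemShat _ (by simp)⟩)
        - Qhat ⟨e.dualBasis ⟨d + i, by have := i.isLt; omega⟩,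
                hmemShat _ (by simp)⟩
        - Qhat ⟨e.dualBasis ⟨d + j, by have := j.isLt; omega⟩,
                hmemShat _ (by simp)⟩) :
    IsUnit G ∧ Ghat = G⁻¹ := by
  classical
  -- symmetry of B
  have hBsymm : ∀ x y : S, B x y = B y x := fun x y => by
    rw [hB, hB, add_comm]; ring
  -- index embedding
  have hfi : ∀ i : Fin (m - d), d + (i : ℕ) < n := fun i => by
    have := i.isLt; omega
  set fi : Fin (m - d) → Fin n := fun i => ⟨d + i, hfi i⟩ with hfidef
  have hfi_inj : Function.Injective fi := by
    intro a b hab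
    simpa [fi, Fin.ext_iff] using hab
  have hESm : ∀ i : Fin (m - d), ((fi i : Fin n) : ℕ) < m := fun i => by
    have := i.isLt; simp [fi]; omega
  set ES : Fin (m - d) → S := fun i => ⟨e (fi i), hmemS _ (hESm i)⟩ with hESdef
  have hGES : ∀ i j, G i j = B (ES i) (ES j) := fun i j => hG i j
  -- the generating set of S and its lift
  set s : Set V := {v : V | ∃ i : Fin n, (i : ℕ) < m ∧ v = e i} with hsdef
  have hsub : s ⊆ (S : Set V) := by
    intro v hv; obtain ⟨i, hi, rfl⟩ := hv; exact hmemS i hi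
  set t : Set S := {x : S | (x : V) ∈ s} with htdef
  have htop : Submodule.span F t = ⊤ := by
    apply Submodule.map_injective_of_injective S.injective_subtype
    rw [Submodule.map_span, Submodule.map_subtype_top]
    have himg : S.subtype '' t = s := by
      ext v
      constructor
      · rintro ⟨x, hx, rfl⟩; exact hx
      · intro hv; exact ⟨⟨v, hsub hv⟩, hv, rfl⟩
    rw [himg, ← hSe]
  -- membership in R for small indices
  have hRsmall : ∀ (j : Fin n) (hj : (j : ℕ) < m), (j : ℕ) < d → (⟨e j, hmemS j hj⟩ : S) ∈ R := by
    intro j hj hjd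
    have h1 : e j ∈ R.map S.subtype := by
      rw [hRe]; exact Submodule.subset_span ⟨j, hjd, rfl⟩
    obtain ⟨r, hrR, hre⟩ := h1
    have : r = ⟨e j, hmemS j hj⟩ := Subtype.ext hre
    rwa [this] at hrR
  -- the set as an image for repr support
  have hset_eq : {v : V | ∃ i : Fin n, (i : ℕ) < d ∧ v = e i} = ⇑e '' {i : Fin n | (i : ℕ) < d} := by
    ext v; constructor
    · rintro ⟨i, hi, rfl⟩; exact ⟨i, hi, rfl⟩
    · rintro ⟨i, hi, rfl⟩; exact ⟨i, hi, rfl⟩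
  -- key: a vector supported on the large indices in R must be 0
  have hker : ∀ c : Fin (m - d) → F,
      (∑ i, c i • ES i) ∈ R → c = 0 := by
    intro c hc
    have hx1 : ((∑ i, c i • ES i : S) : V) ∈ Submodule.span F (⇑e '' {i : Fin n | (i : ℕ) < d}) := by
      rw [← hset_eq, ← hRe]
      exact ⟨_, hc, rfl⟩
    rw [Module.Basis.mem_span_image] at hx1
    funext i₀
    have hrepr : e.repr ((∑ i, c i • ES i : S) : V) (fi i₀) = c i₀ := by
      push_cast [ES]
      rw [map_sum]
      simp only [map_smul, Module.Basis.repr_self, Finsupp.coe_finset_sum, Finset.sum_apply,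
        Finsupp.smul_apply, Finsupp.single_apply, smul_eq_mul]
      rw [Finset.sum_eq_single i₀]
      · simp
      · intro b _ hb
        rw [if_neg (fun h => hb (hfi_inj h)), mul_zero]
      · simp
    have hnot : fi i₀ ∉ (e.repr ((∑ i, c i • ES i : S) : V)).support := by
      intro hmem
      have := hx1 hmem
      simp only [Set.mem_setOf_eq, fi] at this
      omega
    rw [Finsupp.notMem_support_iff] at hnot
    rw [hrepr] at hnot
    simpa using hnot
  -- G is invertible
  have hGunit : IsUnit G := by
    rw [← Matrix.vecMul_injective_iff_isUnit]
    intro c1 c2 h12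
    have h12' : Matrix.vecMul c1 G = Matrix.vecMul c2 G := h12
    have hsub0 : Matrix.vecMul (c1 - c2) G = 0 := by
      rw [Matrix.sub_vecMul, h12', sub_self]
    have : c1 - c2 = 0 := by
      apply hker
      rw [hR]
      have hBlin : B (∑ i, (c1 - c2) i • ES i) = 0 := by
        apply LinearMap.ext_on htop
        rintro y ⟨j, hj, hy⟩
        have hy' : y = ⟨e j, hmemS j hj⟩ := Subtype.ext hy
        subst hy'
        simp only [map_sum, map_smul, LinearMap.sum_apply, LinearMap.smul_apply, smul_eq_mul,
          LinearMap.zero_apply]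
        by_cases hjd : (j : ℕ) < d
        · have hjR := hRsmall j hj hjd
          have : ∀ i, B (ES i) ⟨e j, hmemS j hj⟩ = 0 := by
            intro i
            rw [hBsymm]
            exact (hR _).mp hjR _
          simp [this]
        · -- j = fi j' for j' := j - d
          have hj' : (j : ℕ) - d < m - d := by omega
          have hjfi : j = fi ⟨(j : ℕ) - d, hj'⟩ := by
            simp [fi, Fin.ext_iff]; omega
          have : ∀ i, B (ES i) ⟨e j, hmemS j hj⟩ = G i ⟨(j : ℕ) - d, hj'⟩ := by
            intro i
            rw [hGES]
            congr 1
            exact Subtype.ext (congrArg e hjfi)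
          simp only [this]
          have := congrFun hsub0 ⟨(j : ℕ) - d, hj'⟩
          simpa [Matrix.vecMul, dotProduct, sub_mul, Finset.sum_sub_distrib] using this
      intro y
      simpa using LinearMap.congr_fun hBlin y
    rwa [sub_eq_zero] at this
  refine ⟨hGunit, ?_⟩
  have hdet : IsUnit G.det := (Matrix.isUnit_iff_isUnit_det G).mp hGunit
  -- the preimages x_i
  set xs : Fin (m - d) → S := fun i => ∑ l, G⁻¹ i l • ES l with hxsdef
  set as : Fin (m - d) → Shat := fun i => ⟨e.dualBasis (fi i), hmemShat _ (by simp [fi])⟩ with hasdef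
  -- linking
  have hlink : ∀ i (y : S), (e.dualBasis (fi i)) (y : V) = B (xs i) y := by
    intro i
    have : (e.dualBasis (fi i)).comp S.subtype = B (xs i) := by
      apply LinearMap.ext_on htop
      rintro y ⟨j, hj, hy⟩
      have hy' : y = ⟨e j, hmemS j hj⟩ := Subtype.ext hy
      subst hy'
      simp only [LinearMap.comp_apply, Submodule.coe_subtype]
      rw [Module.Basis.dualBasis_apply_self]
      simp only [xs, map_sum, map_smul, LinearMap.sum_apply, LinearMap.smul_apply, smul_eq_mul]
      by_cases hjd : (j : ℕ) < d
      · have hjR := hRsmall j hj hjd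
        have h0 : ∀ l, B (ES l) ⟨e j, hmemS j hj⟩ = 0 := by
          intro l
          rw [hBsymm]
          exact (hR _).mp hjR _
        have hne : fi i ≠ j := by
          intro h
          have : d + (i : ℕ) = (j : ℕ) := by rw [← h]
          omega
        simp [h0, hne, Ne.symm hne]
      · have hj' : (j : ℕ) - d < m - d := by omega
        have hjfi : j = fi ⟨(j : ℕ) - d, hj'⟩ := by
          simp [fi, Fin.ext_iff]; omega
        have hBG : ∀ l, B (ES l) ⟨e j, hmemS j hj⟩ = G l ⟨(j : ℕ) - d, hj'⟩ := by
          intro l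
          rw [hGES]
          congr 1
          exact Subtype.ext (congrArg e hjfi)
        simp only [hBG]
        have hGG : ∑ l, G⁻¹ i l * G l ⟨(j : ℕ) - d, hj'⟩ = (G⁻¹ * G) i ⟨(j : ℕ) - d, hj'⟩ := by
          simp [Matrix.mul_apply]
        rw [hGG, Matrix.nonsing_inv_mul G hdet]
        simp only [Matrix.one_apply]
        have hiff : (j = fi i) ↔ (i = ⟨(j : ℕ) - d, hj'⟩) := by
          constructor
          · intro h; apply hfi_inj; rw [← h]; exact hjfi
          · intro h; rw [h]; exact hjfi
        by_cases hij : i = ⟨(j : ℕ) - d, hj'⟩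
        · rw [if_pos (hiff.mpr hij), if_pos hij]
        · rw [if_neg (fun h => hij (hiff.mp h)), if_neg hij]
    intro y
    exact LinearMap.congr_fun this y
  -- symmetric G⁻¹
  have hGsymm : G.transpose = G := by
    ext i j
    simp only [Matrix.transpose_apply]
    rw [hGES, hGES, hBsymm]
  have hGinvsymm : (G⁻¹).transpose = G⁻¹ := by
    rw [Matrix.transpose_nonsing_inv, hGsymm]
  -- compute Ghat
  ext i j
  have hQi : Qhat (as i) = Q (xs i) := hQhat (as i) (xs i) (fun y => hlink i y)
  have hQj : Qhat (as j) = Q (xs j) := hQhat (as j) (xs j) (fun y => hlink j y)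
  have hQij : Qhat (as i + as j) = Q (xs i + xs j) := by
    apply hQhat
    intro y
    have : ((as i + as j : Shat) : Module.Dual F V) y = (e.dualBasis (fi i)) (y : V) + (e.dualBasis (fi j)) (y : V) := by
      simp [as]
    rw [this, hlink i y, hlink j y, map_add, LinearMap.add_apply]
  have hGhat' : Ghat i j = B (xs i) (xs j) := by
    rw [hGhat i j]
    have h1 : (⟨e.dualBasis ⟨d + (i:ℕ), hfi i⟩, hmemShat _ (by simp)⟩ : Shat) = as i := rfl
    have h2 : (⟨e.dualBasis ⟨d + (j:ℕ), hfi j⟩, hmemShat _ (by simp)⟩ : Shat) = as j := rfl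
    rw [h1, h2, hQij, hQi, hQj, hB]
  rw [hGhat', ← hlink i (xs j)]
  -- compute dualBasis applied to xs j
  have : ((xs j : S) : V) = ∑ l, G⁻¹ j l • e (fi l) := by
    simp [xs, ES]
  rw [this, map_sum]
  simp only [map_smul, Module.Basis.dualBasis_apply_self, smul_eq_mul]
  rw [Finset.sum_eq_single i]
  · simp only [eq_self_iff_true, if_true, mul_one]
    exact congrFun (congrFun hGinvsymm i) j
  · intro b _ hb
    rw [if_neg (fun h => hb (hfi_inj h)), mul_zero]
  · simp
end

section
/- Assume Q(r) = 0 for all r ∈ R, and let Q̂ : Ŝ → F be the dual quadratic form of Q. Let ψ : V → V be a linear bijection, let ψᵀ : V* → V* be its transpose (ψᵀ(a*) = a* ∘ ψ), and let c ∈ F be nonzero. Then the following are equivalent: (i) ψ(S) = S and Q(ψ(x)) = c·Q(x) for all x ∈ S; (ii) ψᵀ(Ŝ) = Ŝ and Q̂(ψᵀ(a*)) = c·Q̂(a*) for all a* ∈ Ŝ. -/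
/-- `ψ ∈ GL(V)` extends a similarity of `(S, Q)` with ratio `c` iff its
transpose extends a similarity of `(Ŝ, Q̂)` with ratio `c`. -/
theorem stmt18 {F V : Type*} [Field F] [AddCommGroup V] [Module F V]
    [FiniteDimensional F V]
    (S : Submodule F V) (Q : S → F) (B : S →ₗ[F] S →ₗ[F] F)
    (hQ : ∀ (c : F) (x : S), Q (c • x) = c ^ 2 * Q x)
    (hB : ∀ x y : S, B x y = Q (x + y) - Q x - Q y)
    (R : Submodule F S)
    (hR : ∀ x : S, x ∈ R ↔ ∀ y : S, B x y = 0)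
    (Shat : Submodule F (Module.Dual F V))
    (hShat : ∀ a : Module.Dual F V, a ∈ Shat ↔ ∀ r : S, r ∈ R → a r = 0)
    (hQrad : ∀ r : S, r ∈ R → Q r = 0)
    (Qhat : Shat → F)
    (hQhat : ∀ (a : Shat) (x : S),
      (∀ y : S, (a : Module.Dual F V) y = B x y) → Qhat a = Q x)
    (ψ : V ≃ₗ[F] V) (c : F) (hc : c ≠ 0)
    (T : Module.Dual F V →ₗ[F] Module.Dual F V)
    (hT : ∀ (a : Module.Dual F V) (x : V), T a x = a (ψ x)) :
    (S.map ψ.toLinearMap = S ∧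
      ∀ (x : S) (hx : ψ (x : V) ∈ S), Q ⟨ψ (x : V), hx⟩ = c * Q x) ↔
    (Shat.map T = Shat ∧
      ∀ (a : Shat) (ha : T (a : Module.Dual F V) ∈ Shat),
        Qhat ⟨T (a : Module.Dual F V), ha⟩ = c * Qhat a) := by
  classical
  -- Basic facts about B and Q
  have Bsymm : ∀ x y : S, B x y = B y x := by
    intro x y; rw [hB, hB, add_comm]; ring
  have hQ0 : Q 0 = 0 := by
    have h := hQ 0 0
    simpa using h
  have hQadd : ∀ (x r : S), r ∈ R → Q (x + r) = Q x := by
    intro x r hr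
    have h1 := hB x r
    have h2 : B x r = 0 := by rw [Bsymm]; exact (hR r).1 hr x
    have h3 := hQrad r hr
    linear_combination h2 - h1 + h3
  have hQsub : ∀ z z₀ : S, z - z₀ ∈ R → Q z = Q z₀ := by
    intro z z₀ h
    have h' := hQadd z₀ (z - z₀) h
    have e : z₀ + (z - z₀) = z := by abel
    rwa [e] at h'
  -- unprimed versions of the Qhat hypotheses
  have hQhat' : ∀ (a : Module.Dual F V) (ha : a ∈ Shat) (x : S),
      (∀ y : S, a y = B x y) → Qhat ⟨a, ha⟩ = Q x :=
    fun a ha x h => hQhat ⟨a, ha⟩ x h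
  -- kernel and range of B
  have hker : LinearMap.ker B = R := by
    ext x
    rw [LinearMap.mem_ker, hR]
    constructor
    · intro h y; rw [h]; rfl
    · intro h; ext y; exact h y
  have hrangeB : LinearMap.range B = Submodule.dualAnnihilator R := by
    have hle : LinearMap.range B ≤ Submodule.dualAnnihilator R := by
      rintro f hf
      rcases LinearMap.mem_range.mp hf with ⟨x, rfl⟩
      rw [Submodule.mem_dualAnnihilator]
      intro r hr
      show B x r = 0
      rw [Bsymm]; exact (hR r).1 hr x
    refine Submodule.eq_of_le_of_finrank_le hle ?_
    have h1 := LinearMap.finrank_range_add_finrank_ker B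
    rw [hker] at h1
    have h2 : Module.finrank F (↥S ⧸ R) = Module.finrank F R.dualAnnihilator :=
      (Subspace.quotEquivAnnihilator R).finrank_eq
    have h3 := Submodule.finrank_quotient_add_finrank R
    rw [← h2]
    omega
  -- existence of an element of S representing any functional on S vanishing on R
  have hfun_exists : ∀ f : Module.Dual F S, (∀ r ∈ R, f r = 0) →
      ∃ x : S, ∀ y : S, f y = B x y := by
    intro f hf
    have hmem : f ∈ LinearMap.range B := by
      rw [hrangeB, Submodule.mem_dualAnnihilator]; exact hf
    rcases LinearMap.mem_range.mp hmem with ⟨x, hx⟩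
    exact ⟨x, fun y => by rw [← hx]⟩
  -- every element of Shat is B-linked to some x ∈ S
  have hlink_exists : ∀ a : Module.Dual F V, a ∈ Shat →
      ∃ x : S, ∀ y : S, a y = B x y := by
    intro a ha
    have h := hfun_exists (S.dualRestrict a) (fun r hr => by
      rw [Submodule.dualRestrict_apply]
      exact (hShat a).1 ha r hr)
    rcases h with ⟨x, hx⟩
    exact ⟨x, fun y => hx y⟩
  -- every x ∈ S is B-linked to some element of Shat
  have hext : ∀ x : S, ∃ a : Module.Dual F V, a ∈ Shat ∧ ∀ y : S, a y = B x y := by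
    intro x
    obtain ⟨a, ha⟩ := Subspace.dualRestrict_surjective (W := S) (B x)
    refine ⟨a, ?_, fun y => ?_⟩
    · rw [hShat]
      intro r hr
      have h1 : a ((r : S) : V) = S.dualRestrict a r := rfl
      rw [h1, ha, Bsymm]
      exact (hR r).1 hr x
    · have h1 : a ((y : S) : V) = S.dualRestrict a y := rfl
      rw [h1, ha]
  -- Shat is the annihilator of (the image of) R, hence its coannihilator is R
  have hSann : Shat = Submodule.dualAnnihilator (R.map S.subtype) := by
    ext a
    rw [hShat, Submodule.mem_dualAnnihilator]
    constructor
    · intro h w hw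
      rcases Submodule.mem_map.mp hw with ⟨r, hr, rfl⟩
      exact h r hr
    · intro h r hr
      exact h _ (Submodule.mem_map_of_mem hr)
  have hcoann : Shat.dualCoannihilator = R.map S.subtype := by
    rw [hSann]; exact Subspace.dualAnnihilator_dualCoannihilator_eq
  constructor
  · -- forward direction
    rintro ⟨hSmap, hQsim⟩
    have hmemS : ∀ v : V, ψ v ∈ S ↔ v ∈ S := by
      intro v
      constructor
      · intro h
        rw [← hSmap] at h
        rcases Submodule.mem_map.mp h with ⟨w, hw, hwv⟩
        have hwv' : w = v := ψ.injective hwv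
        rwa [← hwv']
      · intro h
        rw [← hSmap]
        exact Submodule.mem_map_of_mem h
    -- the restricted maps
    set φ : S → S := fun x => ⟨ψ x, (hmemS x).mpr x.2⟩ with hφ
    set φi : S → S := fun x =>
      ⟨ψ.symm x, by rw [← hmemS (ψ.symm x), ψ.apply_symm_apply]; exact x.2⟩ with hφi
    have hφφi : ∀ x : S, φ (φi x) = x := by
      intro x; apply Subtype.ext; simp [hφ, hφi]
    have hφadd : ∀ x y : S, φ (x + y) = φ x + φ y := by
      intro x y; apply Subtype.ext; simp [hφ]
    have hQφ : ∀ x : S, Q (φ x) = c * Q x := fun x => hQsim x ((hmemS x).mpr x.2)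
    have hBφ : ∀ x y : S, B (φ x) (φ y) = c * B x y := by
      intro x y
      have h1 := hB (φ x) (φ y)
      rw [← hφadd] at h1
      rw [h1, hQφ, hQφ, hQφ, hB]
      ring
    have hRφ : ∀ r : S, r ∈ R → φ r ∈ R := by
      intro r hr
      rw [hR]
      intro y
      have h1 := hBφ r (φi y)
      rw [hφφi] at h1
      rw [h1, (hR r).1 hr (φi y), mul_zero]
    have hRφi : ∀ r : S, r ∈ R → φi r ∈ R := by
      intro r hr
      rw [hR]
      intro y
      have h1 := hBφ (φi r) y
      rw [hφφi] at h1
      have h2 : B r (φ y) = 0 := (hR r).1 hr (φ y)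
      rw [h2] at h1
      exact (mul_eq_zero.1 h1.symm).resolve_left hc
    have hTmem : ∀ a : Module.Dual F V, a ∈ Shat → T a ∈ Shat := by
      intro a ha
      rw [hShat]
      intro r hr
      rw [hT]
      have h1 : ψ ((r : S) : V) = ((φ r : S) : V) := rfl
      rw [h1]
      exact (hShat a).1 ha (φ r) (hRφ r hr)
    have hTmap : Shat.map T = Shat := by
      apply le_antisymm
      · intro b hb
        rcases Submodule.mem_map.mp hb with ⟨a, ha, rfl⟩
        exact hTmem a ha
      · intro b hb
        refine Submodule.mem_map.mpr ⟨b ∘ₗ (ψ.symm : V →ₗ[F] V), ?_, ?_⟩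
        · rw [hShat]
          intro r hr
          show b (ψ.symm (r : V)) = 0
          have h1 : ψ.symm ((r : S) : V) = ((φi r : S) : V) := rfl
          rw [h1]
          exact (hShat b).1 hb (φi r) (hRφi r hr)
        · ext v
          rw [hT]
          show b (ψ.symm (ψ v)) = b v
          rw [ψ.symm_apply_apply]
    refine ⟨hTmap, ?_⟩
    intro a ha
    obtain ⟨x, hx⟩ := hlink_exists (a : Module.Dual F V) a.2
    have hQa : Qhat a = Q x := hQhat a x hx
    set w : S := φi x with hw
    have hφw : φ w = x := hφφi x
    have hlinkT : ∀ y : S, (T (a : Module.Dual F V)) y = B (c • w) y := by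
      intro y
      rw [hT]
      have h1 : ψ ((y : S) : V) = ((φ y : S) : V) := rfl
      rw [h1, hx (φ y), ← hφw, hBφ]
      simp
    have h2 : Qhat ⟨T (a : Module.Dual F V), ha⟩ = Q (c • w) :=
      hQhat' (T (a : Module.Dual F V)) ha (c • w) hlinkT
    have h3 : Q x = c * Q w := by rw [← hφw]; exact hQφ w
    rw [h2, hQ, hQa, h3]
    ring
  · -- reverse direction
    rintro ⟨hTmap, hQThat⟩
    have hTmem : ∀ a : Module.Dual F V, a ∈ Shat → T a ∈ Shat := by
      intro a ha
      rw [← hTmap]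
      exact Submodule.mem_map_of_mem ha
    have hQT' : ∀ (a : Module.Dual F V) (ha : a ∈ Shat) (ha' : T a ∈ Shat),
        Qhat ⟨T a, ha'⟩ = c * Qhat ⟨a, ha⟩ := fun a ha ha' => hQThat ⟨a, ha⟩ ha'
    -- ψ and ψ⁻¹ map R into R
    have hRψ : ∀ r : S, r ∈ R → ∃ h : ψ (r : V) ∈ S, (⟨ψ (r : V), h⟩ : S) ∈ R := by
      intro r hr
      have hmem : ψ (r : V) ∈ Shat.dualCoannihilator := by
        rw [Submodule.mem_dualCoannihilator]
        intro a ha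
        have h1 : a (ψ (r : V)) = T a r := (hT a r).symm
        rw [h1]
        exact (hShat (T a)).1 (hTmem a ha) r hr
      rw [hcoann] at hmem
      rcases Submodule.mem_map.mp hmem with ⟨r', hr', heq⟩
      have h1 : ψ (r : V) ∈ S := heq ▸ r'.2
      refine ⟨h1, ?_⟩
      have h2 : (⟨ψ (r : V), h1⟩ : S) = r' := Subtype.ext heq.symm
      rwa [h2]
    have hRψi : ∀ r : S, r ∈ R →
        ∃ h : ψ.symm (r : V) ∈ S, (⟨ψ.symm (r : V), h⟩ : S) ∈ R := by
      intro r hr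
      have hmem : ψ.symm (r : V) ∈ Shat.dualCoannihilator := by
        rw [Submodule.mem_dualCoannihilator]
        intro a ha
        rw [← hTmap] at ha
        rcases Submodule.mem_map.mp ha with ⟨b, hb, rfl⟩
        have h1 : T b (ψ.symm (r : V)) = b (r : V) := by rw [hT, ψ.apply_symm_apply]
        rw [h1]
        exact (hShat b).1 hb r hr
      rw [hcoann] at hmem
      rcases Submodule.mem_map.mp hmem with ⟨r', hr', heq⟩
      have h1 : ψ.symm (r : V) ∈ S := heq ▸ r'.2
      refine ⟨h1, ?_⟩
      have h2 : (⟨ψ.symm (r : V), h1⟩ : S) = r' := Subtype.ext heq.symm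
      rwa [h2]
    -- T maps the annihilator of S into itself (radical of Qhat argument)
    have hTann : ∀ a : Module.Dual F V, a ∈ S.dualAnnihilator →
        ∀ y : S, (T a) (y : V) = 0 := by
      intro a haS
      have haz : ∀ y : S, a (y : V) = 0 := fun y =>
        (Submodule.mem_dualAnnihilator a).1 haS y y.2
      have haShat : a ∈ Shat := (hShat a).2 fun r _ => haz r
      have hTaShat : T a ∈ Shat := hTmem a haShat
      obtain ⟨z, hz⟩ := hlink_exists (T a) hTaShat
      have hzR : z ∈ R := by
        rw [hR]
        intro y
        -- produce b ∈ Shat with T b linked to y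
        obtain ⟨b', hb'S, hb'y⟩ := hext y
        rw [← hTmap] at hb'S
        rcases Submodule.mem_map.mp hb'S with ⟨b, hb, rfl⟩
        obtain ⟨x, hx⟩ := hlink_exists b hb
        -- links for the various elements
        have l1 : ∀ y' : S, (a + b) (y' : V) = B x y' := by
          intro y'
          rw [LinearMap.add_apply, haz y', hx y', zero_add]
        have l2 : ∀ y' : S, (T (a + b)) (y' : V) = B (z + y) y' := by
          intro y'
          rw [map_add, LinearMap.add_apply, hz y', hb'y y', map_add, LinearMap.add_apply]
        have lza : ∀ y' : S, a (y' : V) = B 0 y' := by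
          intro y'; rw [haz y']; simp
        -- Qhat values
        have hab : a + b ∈ Shat := Shat.add_mem haShat hb
        have q1 : Qhat ⟨a + b, hab⟩ = Q x := hQhat' _ hab x l1
        have q2 : Qhat ⟨T (a + b), hTmem _ hab⟩ = Q (z + y) :=
          hQhat' _ (hTmem _ hab) (z + y) l2
        have q3 : Qhat ⟨a, haShat⟩ = Q 0 := hQhat' _ haShat 0 lza
        have q4 : Qhat ⟨T a, hTmem a haShat⟩ = Q z := hQhat' _ (hTmem a haShat) z hz
        have q5 : Qhat ⟨b, hb⟩ = Q x := hQhat' _ hb x hx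
        have q6 : Qhat ⟨T b, hTmem b hb⟩ = Q y := hQhat' _ (hTmem b hb) y hb'y
        have s1 := hQT' (a + b) hab (hTmem _ hab)
        have s2 := hQT' a haShat (hTmem a haShat)
        have s3 := hQT' b hb (hTmem b hb)
        rw [q1, q2] at s1
        rw [q3, q4] at s2
        rw [q5, q6] at s3
        have hb1 := hB z y
        rw [hb1, s1, s2, s3, hQ0]
        ring
      intro y
      rw [hz y]
      exact (hR z).1 hzR y
    have hψS : ∀ v : V, v ∈ S → ψ v ∈ S := by
      intro v hv
      have h1 : ψ v ∈ (S.dualAnnihilator).dualCoannihilator := by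
        rw [Submodule.mem_dualCoannihilator]
        intro a ha
        have h2 : a (ψ v) = T a v := (hT a v).symm
        rw [h2]
        exact hTann a ha ⟨v, hv⟩
      rwa [Subspace.dualAnnihilator_dualCoannihilator_eq] at h1
    have hSmap : S.map ψ.toLinearMap = S := by
      apply Submodule.eq_of_le_of_finrank_le
      · intro w hw
        rcases Submodule.mem_map.mp hw with ⟨v, hv, rfl⟩
        exact hψS v hv
      · exact le_of_eq (LinearEquiv.finrank_map_eq ψ S).symm
    have hmemS : ∀ v : V, ψ v ∈ S ↔ v ∈ S := by
      intro v
      constructor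
      · intro h
        rw [← hSmap] at h
        rcases Submodule.mem_map.mp h with ⟨w, hw, hwv⟩
        have hwv' : w = v := ψ.injective hwv
        rwa [← hwv']
      · exact hψS v
    refine ⟨hSmap, ?_⟩
    -- the restricted maps
    set φ : S → S := fun x => ⟨ψ x, (hmemS x).mpr x.2⟩ with hφ
    set φi : S → S := fun x =>
      ⟨ψ.symm x, by rw [← hmemS (ψ.symm x), ψ.apply_symm_apply]; exact x.2⟩ with hφi
    have hφφi : ∀ x : S, φ (φi x) = x := by
      intro x; apply Subtype.ext; simp [hφ, hφi]
    have hφiφ : ∀ x : S, φi (φ x) = x := by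
      intro x; apply Subtype.ext; simp [hφ, hφi]
    have hRφi : ∀ r : S, r ∈ R → φi r ∈ R := by
      intro r hr
      obtain ⟨h1, h2⟩ := hRψi r hr
      exact h2
    -- adjoint existence: for each x there is z with B z · = B x (φ ·) and Q z = c Q x
    have hadj_exists : ∀ x : S, ∃ z : S,
        (∀ y : S, B z y = B x (φ y)) ∧ Q z = c * Q x := by
      intro x
      obtain ⟨a, haS, hax⟩ := hext x
      obtain ⟨z, hz⟩ := hlink_exists (T a) (hTmem a haS)
      have hlink : ∀ y : S, B z y = B x (φ y) := by
        intro y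
        rw [← hz y, hT]
        have h1 : ψ ((y : S) : V) = ((φ y : S) : V) := rfl
        rw [h1]
        exact hax (φ y)
      refine ⟨z, hlink, ?_⟩
      have q1 : Qhat ⟨T a, hTmem a haS⟩ = Q z := hQhat' _ (hTmem a haS) z hz
      have q2 : Qhat ⟨a, haS⟩ = Q x := hQhat' _ haS x hax
      have s := hQT' a haS (hTmem a haS)
      rw [q1, q2] at s
      exact s
    -- adjoint Q value is well defined
    have hadj_Q : ∀ x z : S, (∀ y : S, B z y = B x (φ y)) → Q z = c * Q x := by
      intro x z hz
      obtain ⟨z₀, hz₀, hQz₀⟩ := hadj_exists x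
      have hmem : z - z₀ ∈ R := by
        rw [hR]
        intro y
        rw [map_sub, LinearMap.sub_apply, hz y, hz₀ y, sub_self]
      rw [hQsub z z₀ hmem, hQz₀]
    -- the key relation : φ z ≡ c • x mod R whenever z is an adjoint of x
    have hadj_rel : ∀ x z : S, (∀ y : S, B z y = B x (φ y)) → φ z - c • x ∈ R := by
      intro x z hz
      rw [hR]
      intro u
      rw [Bsymm]
      obtain ⟨zu, hzu, hQzu⟩ := hadj_exists u
      have hBzzu : B z zu = c * B x u := by
        have hsum : ∀ y : S, B (z + zu) y = B (x + u) (φ y) := by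
          intro y
          rw [map_add, map_add, LinearMap.add_apply, LinearMap.add_apply, hz y, hzu y]
        have hq1 := hadj_Q (x + u) (z + zu) hsum
        have hq2 := hadj_Q x z hz
        have hq3 := hadj_Q u zu hzu
        have e1 := hB z zu
        have e2 := hB x u
        rw [hq1, hq2, hq3] at e1
        rw [e1, e2]
        ring
      have huφz : B u (φ z) = c * B u x := by
        rw [← hzu z, Bsymm zu z, hBzzu, Bsymm]
      rw [map_sub, map_smul, smul_eq_mul, huφz]
      ring
    -- conclusion
    intro x hx
    show Q (φ x) = c * Q x
    -- the linear inverse map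
    set φiₗ : S →ₗ[F] S := LinearMap.codRestrict S ((ψ.symm : V →ₗ[F] V) ∘ₗ S.subtype)
      (fun w => by
        rw [show ((ψ.symm : V →ₗ[F] V) ∘ₗ S.subtype) w = ψ.symm (w : V) from rfl,
          ← hmemS (ψ.symm (w : V)), ψ.apply_symm_apply]
        exact w.2) with hφiₗ
    have hφiₗv : ∀ w : S, φiₗ w = φi w := fun w => Subtype.ext rfl
    have hφiₗφ : ∀ y : S, φiₗ (φ y) = y := by
      intro y; rw [hφiₗv, hφiφ]
    have hvanish : ∀ r ∈ R, ((B x) ∘ₗ φiₗ) r = 0 := by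
      intro r hr
      show B x (φiₗ r) = 0
      rw [hφiₗv, Bsymm]
      exact (hR (φi r)).1 (hRφi r hr) x
    obtain ⟨x', hx'⟩ := hfun_exists ((B x) ∘ₗ φiₗ) hvanish
    have hadj : ∀ y : S, B x y = B x' (φ y) := by
      intro y
      have h := hx' (φ y)
      rw [LinearMap.comp_apply, hφiₗφ y] at h
      exact h
    have hQx : Q x = c * Q x' := hadj_Q x' x hadj
    have hrel : φ x - c • x' ∈ R := hadj_rel x' x hadj
    rw [hQsub (φ x) (c • x') hrel, hQ, hQx]
    ring
end
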